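/- For the metric space M described in the context (Example 5.2 of the paper): let j ∈ ℕ and let A be a cyclically monotonic subset of M̃ such that π(A) is disjoint from {u_1^j, u_2^j, u_3^j, v_1^j, v_2^j, v_3^j}. Then there exist u,v ∈ M with u ≠ v such that A ∪ {(u,v)} and A ∪ {(v,u)} are both cyclically monotonic. -/

import Mathlib

/-- The underlying set of the metric space of Example 5.2:
points `x_i, y_i, u_i^j, v_i^j` for `i ∈ {1,2,3}` (coded by `Fin 3`)
and `j ∈ ℕ`. -/
inductive ExPt : Type
  | x : Fin 3 → ExPt
  | y : Fin 3 → ExPt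
  | u : Fin 3 → ℕ → ExPt
  | v : Fin 3 → ℕ → ExPt
deriving DecidableEq

namespace ExPt

/-- Adjacency: precisely the pairs at distance 1, namely
`y_i ~ x_{i+1}` (cyclically), `x_i ~ u_i^j`, `u_i^j ~ v_i^j`, `v_i^j ~ y_i`. -/
def adj : ExPt → ExPt → Bool
  | .y i, .x k => k == i + 1
  | .x k, .y i => k == i + 1
  | .x i, .u k _ => i == k
  | .u k _, .x i => i == k
  | .u i j, .v k l => i == k && j == l
  | .v k l, .u i j => i == k && j == l
  | .v i _, .y k => i == k
  | .y k, .v i _ => i == k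
  | _, _ => false

lemma adj_symm (a b : ExPt) : adj a b = adj b a := by
  cases a <;> cases b <;> rfl

/-- The distance of Example 5.2: `0` on the diagonal, `1` between adjacent
points, and `2` otherwise. -/
noncomputable def exDist (a b : ExPt) : ℝ :=
  if a = b then 0 else if adj a b then 1 else 2

lemma exDist_self (a : ExPt) : exDist a a = 0 := by simp [exDist]

lemma exDist_comm (a b : ExPt) : exDist a b = exDist b a := by
  unfold exDist
  rcases eq_or_ne a b with rfl | h
  · rfl
  · rw [if_neg h, if_neg (Ne.symm h), adj_symm]

lemma one_le_exDist {a b : ExPt} (h : a ≠ b) : 1 ≤ exDist a b := by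
  unfold exDist
  rw [if_neg h]
  split <;> norm_num

lemma exDist_le_two (a b : ExPt) : exDist a b ≤ 2 := by
  unfold exDist
  split
  · norm_num
  · split <;> norm_num

lemma exDist_triangle (a b c : ExPt) : exDist a c ≤ exDist a b + exDist b c := by
  rcases eq_or_ne a b with rfl | hab
  · rw [exDist_self, zero_add]
  rcases eq_or_ne b c with rfl | hbc
  · rw [exDist_self, add_zero]
  have h1 := one_le_exDist hab
  have h2 := one_le_exDist hbc
  have h3 := exDist_le_two a c
  linarith

lemma exDist_eq_zero {a b : ExPt} (h : exDist a b = 0) : a = b := by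
  by_contra hne
  have := one_le_exDist hne
  rw [h] at this
  norm_num at this

instance : TopologicalSpace ExPt := ⊥

instance : DiscreteTopology ExPt := ⟨rfl⟩

noncomputable instance : MetricSpace ExPt :=
  MetricSpace.ofDistTopology exDist exDist_self exDist_comm exDist_triangle
    (fun s => by
      constructor
      · intro _ x hx
        refine ⟨1 / 2, by norm_num, fun y hy => ?_⟩
        have : x = y := by
          by_contra hne
          have := one_le_exDist hne
          linarith
        rwa [← this]
      · intro _
        exact isOpen_discrete s)
    (fun a b h => exDist_eq_zero h)

lemma dist_def (a b : ExPt) : dist a b = exDist a b := rfl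

end ExPt

/-- The set `M̃ = {(x,y) : x ≠ y}` as a subtype. -/
def Mt (M : Type*) : Type _ := {p : M × M // p.1 ≠ p.2}

/-- `A ⊆ M̃` is cyclically monotonic. -/
def CyclMono {M : Type*} [MetricSpace M] (A : Set (Mt M)) : Prop :=
  ∀ (n : ℕ) (p : Fin (n + 1) → Mt M), (∀ i, p i ∈ A) →
    ∑ i : Fin (n + 1), dist (p i).1.1 (p i).1.2 ≤
      ∑ i : Fin (n + 1), dist (p i).1.1 (p (i + 1)).1.2

/-- `π(A)`. -/
def piA {M : Type*} (A : Set (Mt M)) : Set M := {z | ∃ p ∈ A, p.1.1 = z ∨ p.1.2 = z}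

/-- The pair `(u,v)` as an element of `M̃`. -/
def pr {M : Type*} (u v : M) (h : u ≠ v) : Mt M := ⟨(u, v), h⟩

/-!
Write `gap(q) = Σᵢ d(xᵢ, yᵢ) - Σᵢ d(xᵢ, yᵢ₊₁)` for a chain `q = (x₀,y₀), …, (x_m,y_m)`; cyclic
monotonicity of `A` says `gap(q) ≤ d(x_m, y₀)` for chains in `A`. A cycle through a new pair
`(w, z)` can be rotated to end in `(w, z)` and then cut at the occurrences of `(w, z)` into chains
of `A`, so `A ∪ {(w, z)}` stays cyclically monotonic as soon as
`gap(q) + d(w, z) ≤ d(w, y₀) + d(x_m, z)` for every chain `q` in `A`.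

For `(w, z) = (u_i^j, v_i^j)`, with `u_i^j, v_i^j ∉ π(A)`, the right-hand side is at least `3`
unless `y₀ = x_i` and `x_m = y_i`, so only chains from `x_i` to `y_i` of gap `2` are obstructions.
All distances are integers in `[0, 2]`, so two chains of gap `2` cannot be joined across a
distance-one step such as `y_i — x_{i+1}`. As these steps close up cyclically in `i`, some `i`
has no obstruction in either direction, and both `(u_i^j, v_i^j)` and `(v_i^j, u_i^j)` can be added.
-/

open Finset

section Chains

variable {M : Type*} [MetricSpace M]

noncomputable def chainGap (q : ℕ → Mt M) (m : ℕ) : ℝ :=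
  ∑ i ∈ range (m + 1), dist (q i).1.1 (q i).1.2 - ∑ i ∈ range m, dist (q i).1.1 (q (i + 1)).1.2

lemma chainGap_zero (q : ℕ → Mt M) : chainGap q 0 = dist (q 0).1.1 (q 0).1.2 := by
  simp [chainGap]

lemma chainGap_add (q : ℕ → Mt M) (k m : ℕ) :
    chainGap q (k + 1 + m) =
      chainGap q k + chainGap (fun i => q (k + 1 + i)) m - dist (q k).1.1 (q (k + 1)).1.2 := by
  have hdiag : ∑ i ∈ range (k + 1 + m + 1), dist (q i).1.1 (q i).1.2 =
      ∑ i ∈ range (k + 1), dist (q i).1.1 (q i).1.2 +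
        ∑ i ∈ range (m + 1), dist (q (k + 1 + i)).1.1 (q (k + 1 + i)).1.2 := by
    rw [show k + 1 + m + 1 = k + 1 + (m + 1) by ring, sum_range_add]
  have hcross : ∑ i ∈ range (k + 1 + m), dist (q i).1.1 (q (i + 1)).1.2 =
      ∑ i ∈ range k, dist (q i).1.1 (q (i + 1)).1.2 + dist (q k).1.1 (q (k + 1)).1.2 +
        ∑ i ∈ range m, dist (q (k + 1 + i)).1.1 (q (k + 1 + (i + 1))).1.2 := by
    rw [sum_range_add, sum_range_succ]
    rfl
  unfold chainGap
  rw [hdiag, hcross]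
  ring

lemma chainGap_succ (q : ℕ → Mt M) (k : ℕ) :
    chainGap q (k + 1) =
      chainGap q k + dist (q (k + 1)).1.1 (q (k + 1)).1.2 - dist (q k).1.1 (q (k + 1)).1.2 := by
  simpa [chainGap_zero] using chainGap_add q k 0

lemma chainGap_congr {q q' : ℕ → Mt M} {m : ℕ} (h : ∀ i ≤ m, q i = q' i) :
    chainGap q m = chainGap q' m := by
  unfold chainGap
  congr 1
  · exact sum_congr rfl fun i hi => by rw [h i (Nat.lt_succ_iff.mp (mem_range.mp hi))]
  · exact sum_congr rfl fun i hi => by rw [h i (mem_range.mp hi).le, h (i + 1) (mem_range.mp hi)]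

lemma chainGap_mem {S : AddSubgroup ℝ} (hS : ∀ a b : M, dist a b ∈ S) (q : ℕ → Mt M) (m : ℕ) :
    chainGap q m ∈ S :=
  sub_mem (sum_mem fun _ _ => hS _ _) (sum_mem fun _ _ => hS _ _)

lemma sum_dist_cycle_le_iff (q : ℕ → Mt M) (m : ℕ) :
    (∑ i : Fin (m + 1), dist (q i).1.1 (q i).1.2 ≤
        ∑ i : Fin (m + 1), dist (q i).1.1 (q ↑(i + 1)).1.2) ↔
      chainGap q m ≤ dist (q m).1.1 (q 0).1.2 := by
  have hcross : ∑ i : Fin (m + 1), dist (q i).1.1 (q ↑(i + 1)).1.2 =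
      ∑ i ∈ range m, dist (q i).1.1 (q (i + 1)).1.2 + dist (q m).1.1 (q 0).1.2 := by
    have hval : ∀ i : Fin (m + 1), ((i + 1 : Fin (m + 1)) : ℕ) = (i + 1) % (m + 1) := fun i => by
      rw [Fin.val_add]; simp [Nat.add_mod]
    simp only [hval]
    rw [Fin.sum_univ_eq_sum_range (fun i => dist (q i).1.1 (q ((i + 1) % (m + 1))).1.2),
      sum_range_succ, Nat.mod_self]
    congr 1
    exact sum_congr rfl fun i hi => by rw [Nat.mod_eq_of_lt (Nat.succ_lt_succ (mem_range.mp hi))]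
  rw [hcross, Fin.sum_univ_eq_sum_range (fun i => dist (q i).1.1 (q i).1.2), chainGap]
  constructor <;> intro h <;> linarith

variable {A : Set (Mt M)}

lemma CyclMono.chainGap_le (hA : CyclMono A) {q : ℕ → Mt M} {m : ℕ} (hq : ∀ i ≤ m, q i ∈ A) :
    chainGap q m ≤ dist (q m).1.1 (q 0).1.2 :=
  (sum_dist_cycle_le_iff q m).1 (hA m (fun i => q i) fun i => hq i (by omega))

lemma CyclMono.chainGap_add_chainGap_le (hA : CyclMono A) {q q' : ℕ → Mt M} {m m' : ℕ}
    (hq : ∀ i ≤ m, q i ∈ A) (hq' : ∀ i ≤ m', q' i ∈ A) :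
    chainGap q m + chainGap q' m' ≤ dist (q m).1.1 (q' 0).1.2 + dist (q' m').1.1 (q 0).1.2 := by
  set Q : ℕ → Mt M := fun i => if i ≤ m then q i else q' (i - (m + 1))
  have hQ : ∀ i ≤ m, Q i = q i := fun i hi => if_pos hi
  have hQ' : ∀ i, Q (m + 1 + i) = q' i := fun i => by
    simp only [Q, if_neg (show ¬ m + 1 + i ≤ m by omega), Nat.add_sub_cancel_left]
  have hchain : ∀ i ≤ m + 1 + m', Q i ∈ A := by
    intro i hi
    by_cases h : i ≤ m
    · rw [hQ i h]; exact hq i h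
    · obtain ⟨k, rfl⟩ : ∃ k, i = m + 1 + k := ⟨i - (m + 1), by omega⟩
      rw [hQ']; exact hq' k (by omega)
  have hgap := hA.chainGap_le hchain
  rw [chainGap_add, chainGap_congr hQ, chainGap_congr fun i _ => hQ' i, hQ m le_rfl,
    hQ 0 m.zero_le, hQ', show Q (m + 1) = q' 0 by simpa using hQ' 0] at hgap
  linarith

open Fin.NatCast in
lemma CyclMono.insert_of_chainGap_le {e : Mt M} (hA : CyclMono A)
    (he : ∀ q m, (∀ i ≤ m, q i ∈ insert e A) → q m = e →
      chainGap q m ≤ dist (q m).1.1 (q 0).1.2) :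
    CyclMono (insert e A) := by
  intro n p hp
  by_cases hall : ∀ i, p i ∈ A
  · exact hA n p hall
  obtain ⟨i₀, hi₀⟩ := not_forall.mp hall
  -- rotate the cycle so that the occurrence `p i₀ = e` comes last
  have hdiag : ∑ i, dist (p (i + (i₀ + 1))).1.1 (p (i + (i₀ + 1))).1.2 =
      ∑ i, dist (p i).1.1 (p i).1.2 :=
    Equiv.sum_comp (Equiv.addRight (i₀ + 1)) fun i => dist (p i).1.1 (p i).1.2
  have hcross : ∑ i, dist (p (i + (i₀ + 1))).1.1 (p (i + 1 + (i₀ + 1))).1.2 =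
      ∑ i, dist (p i).1.1 (p (i + 1)).1.2 := by
    simp only [add_right_comm _ (1 : Fin (n + 1)) (i₀ + 1)]
    exact Equiv.sum_comp (Equiv.addRight (i₀ + 1)) fun i => dist (p i).1.1 (p (i + 1)).1.2
  have hlast : p ((n : Fin (n + 1)) + (i₀ + 1)) = e := by
    rw [Fin.natCast_eq_last, add_comm i₀, ← add_assoc, Fin.last_add_one, zero_add]
    exact (hp i₀).resolve_right hi₀
  have key := (sum_dist_cycle_le_iff (fun k => p (k + (i₀ + 1))) n).2
    (he _ n (fun i _ => hp _) hlast)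
  simp only [Fin.cast_val_eq_self] at key
  rwa [hdiag, hcross] at key

lemma chainGap_le_of_insert {w z : M} (hwz : w ≠ z)
    (hcrit : ∀ q m, (∀ i ≤ m, q i ∈ A) →
      chainGap q m + dist w z ≤ dist w (q 0).1.2 + dist (q m).1.1 z)
    (m : ℕ) (q : ℕ → Mt M) (hq : ∀ i ≤ m, q i ∈ insert (pr w z hwz) A)
    (hqm : q m = pr w z hwz) :
    chainGap q m ≤ dist w (q 0).1.2 := by
  induction m using Nat.strong_induction_on generalizing q with
  | _ m ih =>
  by_cases hk : ∃ k < m, q k = pr w z hwz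
  · obtain ⟨k, hkm, hk⟩ := hk
    obtain ⟨m', rfl⟩ : ∃ m', m = k + 1 + m' := ⟨m - k - 1, by omega⟩
    have hpre := ih k (by omega) q (fun i hi => hq i (by omega)) hk
    have hsuf := ih m' (by omega) (fun i => q (k + 1 + i)) (fun i hi => hq _ (by omega)) hqm
    have hw : (q k).1.1 = w := by rw [hk]; rfl
    simp only [add_zero] at hsuf
    rw [chainGap_add, hw]
    linarith
  · push Not at hk
    have hw : (q m).1.1 = w := by rw [hqm]; rfl
    have hz : (q m).1.2 = z := by rw [hqm]; rfl
    rcases m with _ | m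
    · rw [chainGap_zero, hw, hz]
    · have := hcrit q m fun i hi => (hq i (by omega)).resolve_left (hk i (by omega))
      rw [chainGap_succ, hw, hz]
      linarith

lemma CyclMono.insert_pr (hA : CyclMono A) {w z : M} (hwz : w ≠ z)
    (hcrit : ∀ q m, (∀ i ≤ m, q i ∈ A) →
      chainGap q m + dist w z ≤ dist w (q 0).1.2 + dist (q m).1.1 z) :
    CyclMono (insert (pr w z hwz) A) :=
  hA.insert_of_chainGap_le fun q m hq hqm => by
    rw [hqm]
    exact chainGap_le_of_insert hwz hcrit m q hq hqm

/-- The endpoints recorded are `y₀` and `x_m`, the ones joined to an inserted pair. -/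
def HasLargeGapChain (A : Set (Mt M)) (a b : M) : Prop :=
  ∃ q m, (∀ i ≤ m, q i ∈ A) ∧ (q 0).1.2 = a ∧ (q m).1.1 = b ∧ 1 < chainGap q m

end Chains

lemma exists_not_and_not_of_fin_three {P Q : Fin 3 → Prop}
    (hP : ∀ i, ¬ (P i ∧ P (i + 1))) (hQ : ∀ i, ¬ (Q i ∧ Q (i + 1))) :
    ∃ i, ¬ P i ∧ ¬ Q i := by
  by_contra! h
  have hP0 := hP 0; have hP1 := hP 1; have hP2 : ¬ (P 2 ∧ P 0) := hP 2
  have hQ0 := hQ 0; have hQ1 := hQ 1; have hQ2 : ¬ (Q 2 ∧ Q 0) := hQ 2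
  have h0 := h 0; have h1 := h 1; have h2 := h 2
  tauto

namespace ExPt

lemma dist_of_ne {a b : ExPt} (h : a ≠ b) : dist a b = if adj a b then 1 else 2 := by
  rw [dist_def, exDist, if_neg h]

lemma dist_le_two (a b : ExPt) : dist a b ≤ 2 := exDist_le_two a b

lemma dist_mem_intCast_range (a b : ExPt) : dist a b ∈ (Int.castAddHom ℝ).range := by
  rcases eq_or_ne a b with rfl | h
  · exact ⟨0, by simp⟩
  · rw [dist_of_ne h]
    split_ifs
    · exact ⟨1, by simp⟩
    · exact ⟨2, by simp⟩

lemma adj_u_iff (i : Fin 3) (j : ℕ) (t : ExPt) : adj (u i j) t = true ↔ t = x i ∨ t = v i j := by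
  cases t <;> simp [adj]; aesop

lemma adj_v_iff (i : Fin 3) (j : ℕ) (t : ExPt) : adj (v i j) t = true ↔ t = y i ∨ t = u i j := by
  cases t <;> simp [adj]; aesop

lemma dist_y_x_add_one (i : Fin 3) : dist (y i) (x (i + 1)) = 1 := by
  rw [dist_of_ne (by simp)]
  simp [adj]

variable {A : Set (Mt ExPt)}

lemma not_hasLargeGapChain_and (hA : CyclMono A) {a b a' b' : ExPt} (h : dist b a' = 1) :
    ¬ (HasLargeGapChain A a b ∧ HasLargeGapChain A a' b') := by
  rintro ⟨⟨q, m, hq, rfl, rfl, hgap⟩, ⟨q', m', hq', rfl, rfl, hgap'⟩⟩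
  have two_le : ∀ r ∈ (Int.castAddHom ℝ).range, 1 < r → 2 ≤ r := by
    rintro _ ⟨k, rfl⟩ hk
    simp only [Int.coe_castAddHom] at hk ⊢
    exact_mod_cast (show (2 : ℤ) ≤ k by exact_mod_cast hk)
  have := hA.chainGap_add_chainGap_le hq hq'
  have := two_le _ (chainGap_mem dist_mem_intCast_range q m) hgap
  have := two_le _ (chainGap_mem dist_mem_intCast_range q' m') hgap'
  have := dist_le_two (q' m').1.1 (q 0).1.2
  linarith

lemma exists_not_hasLargeGapChain (hA : CyclMono A) :
    ∃ i : Fin 3, ¬ HasLargeGapChain A (x i) (y i) ∧ ¬ HasLargeGapChain A (y i) (x i) :=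
  exists_not_and_not_of_fin_three
    (fun i => not_hasLargeGapChain_and hA (dist_y_x_add_one i))
    (fun i h => not_hasLargeGapChain_and hA (by rw [dist_comm]; exact dist_y_x_add_one i)
      ⟨h.2, h.1⟩)

lemma cyclMono_insert_pr_of_adj_iff (hA : CyclMono A) {w z a b : ExPt} (hwz : w ≠ z)
    (hw : w ∉ piA A) (hz : z ∉ piA A)
    (hwadj : ∀ t, adj w t = true ↔ t = a ∨ t = z) (hzadj : ∀ t, adj z t = true ↔ t = b ∨ t = w)
    (hab : ¬ HasLargeGapChain A a b) :
    CyclMono (insert (pr w z hwz) A) := by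
  have hdist_w : ∀ t ∈ piA A, dist w t = if t = a then 1 else 2 := by
    intro t ht
    have hwt : w ≠ t := by rintro rfl; exact hw ht
    have htz : t ≠ z := by rintro rfl; exact hz ht
    simp [dist_of_ne hwt, hwadj, htz]
  have hdist_z : ∀ t ∈ piA A, dist t z = if t = b then 1 else 2 := by
    intro t ht
    have hzt : z ≠ t := by rintro rfl; exact hz ht
    have htw : t ≠ w := by rintro rfl; exact hw ht
    simp [dist_comm t, dist_of_ne hzt, hzadj, htw]
  have hwz1 : dist w z = 1 := by rw [dist_of_ne hwz, if_pos ((hwadj z).2 (Or.inr rfl))]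
  refine hA.insert_pr hwz fun q m hq => ?_
  have hgap := hA.chainGap_le hq
  have := dist_le_two (q m).1.1 (q 0).1.2
  rw [hwz1, hdist_w _ ⟨q 0, hq 0 m.zero_le, Or.inr rfl⟩, hdist_z _ ⟨q m, hq m le_rfl, Or.inl rfl⟩]
  split_ifs with hsa htb
  · have := not_lt.mp fun h => hab ⟨q, m, hq, hsa, htb, h⟩
    linarith
  all_goals linarith

end ExPt

/-- Example 5.2: for a cyclically monotonic `A ⊆ M̃` with `π(A)` avoiding the
six points `u_i^j, v_i^j`, one can add a pair `(u,v)` in both orders keeping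
cyclic monotonicity. -/
theorem stmt19 (j : ℕ) (A : Set (Mt ExPt)) (hA : CyclMono A)
    (hdisj : ∀ i : Fin 3, ExPt.u i j ∉ piA A ∧ ExPt.v i j ∉ piA A) :
    ∃ (u v : ExPt) (huv : u ≠ v),
      CyclMono (insert (pr u v huv) A) ∧ CyclMono (insert (pr v u huv.symm) A) := by
  obtain ⟨i, hxy, hyx⟩ := ExPt.exists_not_hasLargeGapChain hA
  have huv : ExPt.u i j ≠ ExPt.v i j := ExPt.noConfusion
  exact ⟨_, _, huv,
    ExPt.cyclMono_insert_pr_of_adj_iff hA huv (hdisj i).1 (hdisj i).2 (ExPt.adj_u_iff i j)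
      (ExPt.adj_v_iff i j) hxy,
    ExPt.cyclMono_insert_pr_of_adj_iff hA huv.symm (hdisj i).2 (hdisj i).1 (ExPt.adj_v_iff i j)
      (ExPt.adj_u_iff i j) hyx⟩
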